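/- arXiv:1708.02466 — 6 statements merged into one kernel-verified Lean document; each statement's English description precedes it below -/
import Mathlib

section
/- For every real number a with a ≥ (3 + √13)/2, the (a,a)-Mahler measure of S(x,y) = y² + 2xy − x³ + x equals 3·log a; that is, (1/(2π)²)·∫₀^{2π}∫₀^{2π} log|S(a·e^{iθ}, a·e^{iφ})| dθ dφ = 3·log a. -/
/-- The `(a,b)`-Mahler measure of a two-variable (Laurent) polynomial function `P`,
given by `(1/(2π)²)·∫₀^{2π}∫₀^{2π} log|P(a·e^{iθ}, b·e^{iφ})| dθ dφ`. -/
noncomputable def mahlerMeasure (P : ℂ → ℂ → ℂ) (a b : ℝ) : ℝ :=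
  (1 / (2 * Real.pi) ^ 2) *
    ∫ θ in (0:ℝ)..(2 * Real.pi), ∫ φ in (0:ℝ)..(2 * Real.pi),
      Real.log ‖P ((a : ℂ) * Complex.exp (θ * Complex.I))
        ((b : ℂ) * Complex.exp (φ * Complex.I))‖

/-- `S(x,y) = y² + 2xy − x³ + x`. -/
noncomputable def S : ℂ → ℂ → ℂ := fun x y => y ^ 2 + 2 * x * y - x ^ 3 + x

/-!
For `‖x‖ = a` with `x ≠ ±a`, the quadratic `y ↦ S x y` has no zero in the closed disc `‖y‖ ≤ a`:
a zero would give `a ‖x² - 1‖ = ‖y² + 2xy‖ ≤ 3a²`, while `‖x² - 1‖ > a² - 1` because `x²` is not a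
nonnegative real, and this contradicts `a² ≥ 3a + 1`. So `log ‖S x ·‖` is harmonic on the disc and
its average over the circle is `log ‖S x 0‖ = log ‖x (x - 1) (x + 1)‖`. The roots `0, ±1` lie inside
the circle of radius `a`, so each linear factor contributes `log a` to the outer average.
-/

open Complex Metric Filter Real
open scoped ComplexOrder

theorem mahlerMeasure_eq_circleAverage (P : ℂ → ℂ → ℂ) (a b : ℝ) :
    mahlerMeasure P a b =
      circleAverage (fun x ↦ circleAverage (fun y ↦ Real.log ‖P x y‖) 0 b) 0 a := by
  rw [mahlerMeasure, show 1 / (2 * π) ^ 2 = (2 * π)⁻¹ * (2 * π)⁻¹ by ring, mul_assoc]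
  simp only [circleAverage, circleMap_zero, smul_eq_mul, intervalIntegral.integral_const_mul]

theorem circleAverage_log_norm_prod_sub {c : ℂ} {R : ℝ} {s : Finset ℂ}
    (hs : ∀ u ∈ s, u ∈ ball c |R|) :
    circleAverage (fun z ↦ Real.log ‖∏ u ∈ s, (z - u)‖) c R = s.card * Real.log R := by
  have hsplit : Set.EqOn (fun z ↦ Real.log ‖∏ u ∈ s, (z - u)‖) (∑ u ∈ s, (Real.log ‖· - u‖))
      (sphere c |R|) := by
    intro z hz
    have hne : ∀ u ∈ s, ‖z - u‖ ≠ 0 := fun u hu h ↦ by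
      rw [norm_eq_zero, sub_eq_zero] at h
      subst h
      exact (mem_sphere.mp hz).not_lt (mem_ball.mp (hs z hu))
    simp only [norm_prod, Finset.sum_apply]
    exact Real.log_prod hne
  rw [circleAverage_congr_sphere hsplit, circleAverage_sum (f := fun u z ↦ Real.log ‖z - u‖)
    fun u _ ↦ (analyticOnNhd_id.sub analyticOnNhd_const).meromorphicOn.circleIntegrable_log_norm,
    Finset.sum_congr rfl fun u hu ↦
      circleAverage_log_norm_sub_const_of_mem_closedBall (ball_subset_closedBall (hs u hu))]
  simp

theorem norm_sub_one_lt_norm_sub_one {z : ℂ} (hz : ¬ 0 ≤ z) : ‖z‖ - 1 < ‖z - 1‖ := by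
  have hre : z.re < ‖z‖ := (re_le_norm z).lt_of_ne (mt re_eq_norm.mp hz)
  have hsq : ‖z - 1‖ ^ 2 = ‖z‖ ^ 2 - 2 * z.re + 1 := by
    simp only [Complex.sq_norm, normSq_apply, sub_re, one_re, sub_im, one_im]
    ring
  nlinarith [norm_nonneg (z - 1), norm_nonneg z]

theorem S_ne_zero {a : ℝ} (ha : 3 * a + 1 ≤ a ^ 2) {x y : ℂ} (hx : ‖x‖ = a)
    (hx₁ : x ≠ a) (hx₂ : x ≠ -a) (hy : ‖y‖ ≤ a) : S x y ≠ 0 := by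
  intro hS
  have ha0 : 0 < a := by nlinarith [norm_nonneg x]
  have hx_sq : ¬ 0 ≤ x ^ 2 := by
    intro hsq
    have hxre : x = x.re := ext rfl (by simpa [Complex.sq_nonneg_iff] using hsq)
    have habs : |x.re| = a := by rwa [hxre, norm_real, Real.norm_eq_abs] at hx
    rcases abs_eq ha0.le |>.mp habs with h | h
    · exact hx₁ (by rw [hxre, h])
    · exact hx₂ (by rw [hxre, h, ofReal_neg])
  have hlower : a ^ 2 - 1 < ‖x ^ 2 - 1‖ := by
    simpa [norm_pow, hx] using norm_sub_one_lt_norm_sub_one hx_sq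
  have hupper : a * ‖x ^ 2 - 1‖ ≤ 3 * a ^ 2 := by
    calc a * ‖x ^ 2 - 1‖ = ‖y ^ 2 + 2 * x * y‖ := by
          rw [← hx, ← norm_mul]
          congr 1
          simp only [S] at hS
          linear_combination -hS
      _ ≤ ‖y‖ ^ 2 + 2 * a * ‖y‖ := by
          refine (norm_add_le _ _).trans ?_
          simp [norm_pow, hx]
      _ ≤ 3 * a ^ 2 := by nlinarith [norm_nonneg y]
  nlinarith

theorem circleAverage_log_norm_S {a : ℝ} (ha : 3 * a + 1 ≤ a ^ 2) {x : ℂ} (hx : ‖x‖ = a)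
    (hx₁ : x ≠ a) (hx₂ : x ≠ -a) :
    circleAverage (fun y ↦ Real.log ‖S x y‖) 0 a = Real.log ‖S x 0‖ := by
  have ha0 : 0 ≤ a := hx ▸ norm_nonneg x
  refine AnalyticOnNhd.circleAverage_log_norm_of_ne_zero (fun y _ ↦ by unfold S; fun_prop)
    fun y hy ↦ S_ne_zero ha hx hx₁ hx₂ ?_
  simpa [abs_of_nonneg ha0] using hy

theorem S_zero_eq_neg_prod (x : ℂ) : S x 0 = -∏ u ∈ ({0, 1, -1} : Finset ℂ), (x - u) := by
  rw [Finset.prod_insert (by norm_num), Finset.prod_pair (by norm_num), S]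
  ring

theorem stmt_0 (a : ℝ) (ha : (3 + Real.sqrt 13) / 2 ≤ a) :
    mahlerMeasure S a a = 3 * Real.log a := by
  have hsqrt : Real.sqrt 13 ^ 2 = 13 := Real.sq_sqrt (by norm_num)
  have h3 : 3 ≤ Real.sqrt 13 := by nlinarith [Real.sqrt_nonneg 13]
  -- `(3 + √13) / 2` is the larger root of `a² - 3a - 1`.
  have hquad : 3 * a + 1 ≤ a ^ 2 := by nlinarith
  have ha0 : 0 < a := by linarith
  have hinner : (fun x ↦ circleAverage (fun y ↦ Real.log ‖S x y‖) 0 a)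
      =ᶠ[codiscreteWithin (sphere 0 |a|)]
        fun x ↦ Real.log ‖∏ u ∈ ({0, 1, -1} : Finset ℂ), (x - u)‖ := by
    filter_upwards [compl_singleton_mem_codiscreteWithin (a : ℂ),
      compl_singleton_mem_codiscreteWithin (-a : ℂ), self_mem_codiscreteWithin _]
      with x hx₁ hx₂ hx
    rw [circleAverage_log_norm_S hquad (by simpa [abs_of_pos ha0] using hx) hx₁ hx₂,
      S_zero_eq_neg_prod, norm_neg]
  rw [mahlerMeasure_eq_circleAverage, circleAverage_congr_codiscreteWithin hinner ha0.ne',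
    circleAverage_log_norm_prod_sub]
  · norm_num
  · intro u hu
    simp only [Finset.mem_insert, Finset.mem_singleton] at hu
    rcases hu with rfl | rfl | rfl <;> simp [abs_of_pos ha0] <;> linarith
end

section
/- Let a > 0 be real and let X be a complex number with |X| = a. Define Y₋ = X·(−1 − (X + 1 − X⁻¹)^{1/2}), where z^{1/2} denotes the principal square root (the principal branch of z ↦ z^{1/2}, sending a number of argument φ ∈ (−π, π] to one of argument φ/2). Then |Y₋| ≥ a. (In particular Y₋ is a root in Y of Y² + 2XY − X³ + X = 0 when X + 1 − X⁻¹ avoids the branch cut.) -/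
theorem Complex.re_cpow_one_half_nonneg (z : ℂ) : 0 ≤ (z ^ ((1 : ℂ) / 2)).re := by
  rw [one_div, Complex.cpow_inv_two_re]
  exact Real.sqrt_nonneg _

theorem Complex.one_le_norm_one_add_of_re_nonneg {w : ℂ} (hw : 0 ≤ w.re) : 1 ≤ ‖1 + w‖ :=
  calc (1 : ℝ) ≤ (1 + w).re := by simpa using hw
    _ ≤ ‖1 + w‖ := Complex.re_le_norm _

theorem stmt_9_general (a : ℝ) (X : ℂ) (hX : ‖X‖ = a) :
    a ≤ ‖X * (-1 - (X + 1 - X⁻¹) ^ ((1 : ℂ) / 2))‖ := by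
  set w : ℂ := (X + 1 - X⁻¹) ^ ((1 : ℂ) / 2)
  have hw : 1 ≤ ‖1 + w‖ :=
    Complex.one_le_norm_one_add_of_re_nonneg (Complex.re_cpow_one_half_nonneg _)
  calc a = ‖X‖ * 1 := by rw [hX, mul_one]
    _ ≤ ‖X‖ * ‖1 + w‖ := mul_le_mul_of_nonneg_left hw (norm_nonneg X)
    _ = ‖X * (-1 - w)‖ := by rw [norm_mul, ← norm_neg (1 + w), neg_add']

/-- For `a > 0` and `|X| = a`, the root `Y₋ = X·(−1 − (X + 1 − X⁻¹)^{1/2})` of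
`Y² + 2XY − X³ + X = 0` (principal branch of the square root) satisfies `|Y₋| ≥ a`. -/
theorem stmt_9 (a : ℝ) (ha : 0 < a) (X : ℂ) (hX : ‖X‖ = a) :
    a ≤ ‖X * (-1 - (X + 1 - X⁻¹) ^ ((1 : ℂ) / 2))‖ :=
  stmt_9_general a X hX
end

section
/- Let a > 0 be real with |a − a⁻¹| ≥ 3, and let X be a complex number with |X| = a. Define Y₊ = X·(−1 + (X + 1 − X⁻¹)^{1/2}), where z^{1/2} denotes the principal square root. Then |Y₊| ≥ a. -/
/-!
Put `s = (X + 1 - X⁻¹)^{1/2}`, so that `Y₊ = X (s - 1)` and `(s - 1)(s + 1) = s² - 1 = X - X⁻¹`,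
which has norm at least `|a - a⁻¹| ≥ 3`. Since `‖s + 1‖ ≤ ‖s - 1‖ + 2`, the number `u = ‖s - 1‖`
satisfies `u (u + 2) ≥ 3`, hence `u ≥ 1` and `‖Y₊‖ = a u ≥ a`. No property of the branch is needed.
-/

lemma norm_sq_sub_one_le {R : Type*} [NormedRing R] [NormOneClass R] (s : R) :
    ‖s ^ 2 - 1‖ ≤ ‖s - 1‖ * (‖s - 1‖ + 2) := by
  have hfactor : s ^ 2 - 1 = (s - 1) * ((s - 1) + (1 + 1)) := by noncomm_ring
  have htwo : ‖(1 : R) + 1‖ ≤ 2 := (norm_add_le _ _).trans (by rw [norm_one]; norm_num)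
  rw [hfactor]
  refine (norm_mul_le _ _).trans (mul_le_mul_of_nonneg_left ?_ (norm_nonneg _))
  linarith [norm_add_le (s - 1) (1 + 1)]

lemma one_le_norm_sub_one_of_three_le_norm_sq_sub_one {R : Type*} [NormedRing R]
    [NormOneClass R] {s : R} (hs : 3 ≤ ‖s ^ 2 - 1‖) : 1 ≤ ‖s - 1‖ := by
  nlinarith [norm_sq_sub_one_le s, norm_nonneg (s - 1)]

lemma abs_norm_sub_norm_inv_le {K : Type*} [NormedDivisionRing K] (x : K) :
    |‖x‖ - ‖x‖⁻¹| ≤ ‖x - x⁻¹‖ := by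
  simpa only [norm_inv] using abs_norm_sub_norm_le x x⁻¹

theorem stmt_10_general (a : ℝ) (hta : 3 ≤ |a - a⁻¹|) (X : ℂ)
    (hX : ‖X‖ = a) :
    a ≤ ‖X * (-1 + (X + 1 - X⁻¹) ^ ((1 : ℂ) / 2))‖ := by
  set s := (X + 1 - X⁻¹) ^ ((1 : ℂ) / 2) with hs_def
  have hsq : s ^ 2 - 1 = X - X⁻¹ := by
    rw [hs_def, one_div, show ((2 : ℂ)⁻¹) = ((2 : ℕ) : ℂ)⁻¹ by norm_num,
      Complex.cpow_nat_inv_pow _ two_ne_zero]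
    ring
  have hs : 1 ≤ ‖s - 1‖ := by
    refine one_le_norm_sub_one_of_three_le_norm_sq_sub_one ?_
    rw [hsq]
    exact hta.trans (hX ▸ abs_norm_sub_norm_inv_le X)
  rw [norm_mul, hX, neg_add_eq_sub]
  exact le_mul_of_one_le_right (hX ▸ norm_nonneg X) hs

/-- For `a > 0` with `|a − a⁻¹| ≥ 3` and `|X| = a`, the root
`Y₊ = X·(−1 + (X + 1 − X⁻¹)^{1/2})` of `Y² + 2XY − X³ + X = 0`
(principal branch of the square root) satisfies `|Y₊| ≥ a`. -/
theorem stmt_10 (a : ℝ) (ha : 0 < a) (hta : 3 ≤ |a - a⁻¹|) (X : ℂ)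
    (hX : ‖X‖ = a) :
    a ≤ ‖X * (-1 + (X + 1 - X⁻¹) ^ ((1 : ℂ) / 2))‖ :=
  stmt_10_general a hta X hX
end

section
/- Let a > 0 be real with |a − a⁻¹| ≤ 1, and let X be a complex number with |X| = a. Define Y₊ = X·(−1 + (X + 1 − X⁻¹)^{1/2}), where z^{1/2} denotes the principal square root. Then |Y₊| ≤ a. -/
/-!
Write `X = a e^{iθ}`, `t = a - a⁻¹` and `w = X + 1 - X⁻¹`. Then
`w = 1 + t cos θ + i (a + a⁻¹) sin θ` with `(a + a⁻¹)² = t² + 4`, and `Y₊ = X (√w - 1)`,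
so it suffices that `‖√w - 1‖ ≤ 1`, i.e. that `w` lies in the image of the disc `‖z - 1‖ ≤ 1`
under squaring: the cardioid `‖w‖² ≤ 2 (‖w‖ + re w)`. For `|t| ≤ 1` this is a polynomial
inequality in `t` and `cos θ`.
-/

open Complex

lemma norm_cpow_two_inv_sub_one_le_one {w : ℂ} (hw : ‖w‖ ^ 2 ≤ 2 * (‖w‖ + w.re)) :
    ‖w ^ (2⁻¹ : ℂ) - 1‖ ≤ 1 := by
  set z := w ^ (2⁻¹ : ℂ) with hz
  have hnorm : ‖z‖ ^ 2 = ‖w‖ := by rw [← norm_pow, hz, cpow_ofNat_inv_pow]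
  have hre : ‖w‖ / 2 ≤ z.re := by
    rw [hz, cpow_inv_two_re]
    exact Real.le_sqrt_of_sq_le (by linarith)
  have hsq : ‖z - 1‖ ^ 2 = ‖z‖ ^ 2 - 2 * z.re + 1 := by
    simp only [Complex.sq_norm, normSq_apply, sub_re, sub_im, one_re, one_im]
    ring
  exact (sq_le_one_iff₀ (norm_nonneg _)).1 (by linarith)

lemma sq_norm_le_two_mul_norm_add_re {t c : ℝ} {w : ℂ} (ht : t ^ 2 ≤ 1) (hc : c ^ 2 ≤ 1)
    (hre : w.re = 1 + t * c) (him : w.im ^ 2 = (t ^ 2 + 4) * (1 - c ^ 2)) :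
    ‖w‖ ^ 2 ≤ 2 * (‖w‖ + w.re) := by
  have hnorm : ‖w‖ ^ 2 = 5 + t ^ 2 + 2 * t * c - 4 * c ^ 2 := by
    rw [Complex.sq_norm, normSq_apply, ← sq, ← sq, him, hre]
    ring
  -- the goal is `3 + t² - 4c² ≤ 2‖w‖`; this is its squared form
  have key : (3 + t ^ 2 - 4 * c ^ 2) ^ 2 ≤ 4 * ‖w‖ ^ 2 := by
    rw [hnorm]
    nlinarith [mul_nonneg (sub_nonneg.2 ht) (sub_nonneg.2 hc), sq_nonneg (t + c)]
  nlinarith [norm_nonneg w]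

lemma re_add_one_sub_inv (X : ℂ) :
    (X + 1 - X⁻¹).re = 1 + (‖X‖ - ‖X‖⁻¹) * (X.re / ‖X‖) := by
  rcases eq_or_ne X 0 with rfl | hX
  · simp
  have : ‖X‖ ≠ 0 := norm_ne_zero_iff.2 hX
  simp only [sub_re, add_re, one_re, inv_re, normSq_eq_norm_sq]
  field_simp
  ring

lemma im_add_one_sub_inv (X : ℂ) :
    (X + 1 - X⁻¹).im = (‖X‖ + ‖X‖⁻¹) * (X.im / ‖X‖) := by
  rcases eq_or_ne X 0 with rfl | hX
  · simp
  have : ‖X‖ ≠ 0 := norm_ne_zero_iff.2 hX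
  simp only [sub_im, add_im, one_im, inv_im, normSq_eq_norm_sq]
  field_simp
  ring

/-- For `a > 0` with `|a − a⁻¹| ≤ 1` and `|X| = a`, the root
`Y₊ = X·(−1 + (X + 1 − X⁻¹)^{1/2})` of `Y² + 2XY − X³ + X = 0`
(principal branch of the square root) satisfies `|Y₊| ≤ a`. -/
theorem stmt_11 (a : ℝ) (ha : 0 < a) (hta : |a - a⁻¹| ≤ 1) (X : ℂ)
    (hX : ‖X‖ = a) :
    ‖X * (-1 + (X + 1 - X⁻¹) ^ ((1 : ℂ) / 2))‖ ≤ a := by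
  subst hX
  have hnormSq : X.re ^ 2 + X.im ^ 2 = ‖X‖ ^ 2 := by
    rw [Complex.sq_norm, normSq_apply]; ring
  rw [norm_mul, one_div, neg_add_eq_sub]
  refine mul_le_of_le_one_right ha.le (norm_cpow_two_inv_sub_one_le_one ?_)
  refine sq_norm_le_two_mul_norm_add_re (sq_le_one_iff_abs_le_one _ |>.2 hta) ?_
    (re_add_one_sub_inv X) ?_
  · rw [sq_le_one_iff_abs_le_one, abs_div, abs_norm]
    exact div_le_one_of_le₀ (abs_re_le_norm X) (norm_nonneg X)
  · rw [im_add_one_sub_inv]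
    field_simp [ha.ne']
    linear_combination (‖X‖ ^ 2 + 1) ^ 2 * hnormSq
end

section
/- Let a be real with √((1 + √5 − √(2√5 + 2))/2) ≤ a ≤ √((1 + √5 + √(2√5 + 2))/2), and let x₁ be a complex number with |x₁| = a and x₁² ≠ −1. Set w = x₁ + x₁⁻¹ and y₁₊ = (−(2 + w²) + (4 + w⁴)^{1/2}) / (2w), where z^{1/2} denotes the principal square root. Then |y₁₊| ≤ 1. -/
/-!
Put `A = 2 + w ^ 2` and let `B` be the principal root of `4 + w ^ 4`. Since
`(B - A) * (B + A) = -4 * w ^ 2`, the bound `‖y₁₊‖ ≤ 1` follows from `‖B - A‖ ≤ ‖B + A‖`, that is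
from `0 ≤ re (A * conj B)`. With `z = w ^ 2` and `re B ≥ 0` this holds as soon as `re z ≤ 0` forces
`‖z‖ ≤ 2`. For `w = x + x⁻¹` and `m = ‖x‖ ^ 2 + ‖x‖ ^ (-2)` the identity
`m * ‖w‖ ^ 2 - 2 * re (w ^ 2) = m ^ 2 - 4` gives `‖w‖ ^ 2 ≤ (m ^ 2 - 4) / m` when `re (w ^ 2) ≤ 0`,
which is at most `2` exactly when `m ≤ 1 + √5`; the bounds on `a` say that
`a ^ 2 + a ^ (-2) ≤ 1 + √5`.
-/

open Complex

theorem sqrt_two_mul_sqrt_five_add_two_lt : √(2 * √5 + 2) < 1 + √5 := by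
  have h5 : √5 ^ 2 = 5 := Real.sq_sqrt (by norm_num)
  rw [Real.sqrt_lt' (by positivity)]
  nlinarith

theorem sq_add_one_le_one_add_sqrt_five_mul {n : ℝ} (hlo : (1 + √5 - √(2 * √5 + 2)) / 2 ≤ n)
    (hhi : n ≤ (1 + √5 + √(2 * √5 + 2)) / 2) : n ^ 2 + 1 ≤ (1 + √5) * n := by
  have h5 : √5 ^ 2 = 5 := Real.sq_sqrt (by norm_num)
  have hc : √(2 * √5 + 2) ^ 2 = 2 * √5 + 2 := Real.sq_sqrt (by positivity)
  nlinarith [mul_nonneg (sub_nonneg.2 hlo) (sub_nonneg.2 hhi)]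

theorem add_inv_sq_le_of_sq_add_one_le {n : ℝ} (hn : 0 < n) (h : n ^ 2 + 1 ≤ (1 + √5) * n) :
    (n + n⁻¹) ^ 2 ≤ 2 * (n + n⁻¹) + 4 := by
  have h5 : √5 ^ 2 = 5 := Real.sq_sqrt (by norm_num)
  have hm : n + n⁻¹ ≤ 1 + √5 := by
    rw [← div_le_iff₀ hn] at h
    simpa [add_div, sq, hn.ne'] using h
  have hm0 : 0 ≤ n + n⁻¹ := by positivity
  have h51 : 1 ≤ √5 := by nlinarith [Real.sqrt_nonneg 5]
  nlinarith [mul_nonneg (sub_nonneg.2 hm) (by linarith : 0 ≤ n + n⁻¹ - 1 + √5)]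

/- Multiplied by `u`, the claim reads `-p * q ^ 2 ≤ (2 + p) * u ^ 2`. For `p < 0`, `u ^ 2` is the
larger root of `S ^ 2 - c * S - p ^ 2 * q ^ 2` with `c = 4 + p ^ 2 - q ^ 2`, and at
`S = -p * q ^ 2 / (2 + p)` this quadratic equals
`-2 * p * q ^ 2 * (p ^ 2 + q ^ 2 - 4) / (2 + p) ^ 2 ≤ 0`. -/
theorem two_add_mul_add_mul_nonneg {p q u v : ℝ} (hu : 0 ≤ u)
    (hre : u ^ 2 - v ^ 2 = 4 + p ^ 2 - q ^ 2) (him : u * v = p * q)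
    (hpq : p ≤ 0 → p ^ 2 + q ^ 2 ≤ 4) : 0 ≤ (2 + p) * u + q * v := by
  rcases hu.eq_or_lt with rfl | hu
  · have hv : v = 0 := by
      rcases mul_eq_zero.1 (him.symm.trans (zero_mul v)) with rfl | rfl
      · nlinarith [hpq le_rfl]
      · nlinarith
    simp [hv]
  have hmul : u * ((2 + p) * u + q * v) = (2 + p) * u ^ 2 + p * q ^ 2 := by
    linear_combination q * him
  refine nonneg_of_mul_nonneg_right (hmul ▸ ?_) hu
  rcases le_or_gt 0 p with hp | hp
  · positivity
  have hp2 := hpq hp.le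
  have h2p : 0 ≤ 2 + p := by nlinarith
  set c := 4 + p ^ 2 - q ^ 2
  have hroot : u ^ 2 * (u ^ 2 - c) = p ^ 2 * q ^ 2 := by
    rw [← hre]; linear_combination (u * v + p * q) * him
  have hc : (2 + p) * c ≤ (2 + p) * u ^ 2 := by nlinarith [sq_nonneg v]
  by_contra! h
  nlinarith [mul_pos (by linarith : 0 < -p * q ^ 2 - (2 + p) * u ^ 2)
      (by nlinarith : 0 < -p * q ^ 2 + (2 + p) * u ^ 2 - c * (2 + p)),
    mul_nonneg (sq_nonneg q) (mul_nonneg (neg_nonneg.2 hp.le) (sub_nonneg.2 hp2))]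

theorem Complex.norm_sub_le_norm_add_of_sq_eq {z B : ℂ} (hB : B ^ 2 = 4 + z ^ 2) (hBre : 0 ≤ B.re)
    (hz : z.re ≤ 0 → ‖z‖ ≤ 2) : ‖B - (2 + z)‖ ≤ ‖B + (2 + z)‖ := by
  have hre : B.re ^ 2 - B.im ^ 2 = 4 + z.re ^ 2 - z.im ^ 2 := by
    have := congrArg re hB
    simp only [sq, mul_re, add_re, re_ofNat] at this
    linarith
  have him : B.re * B.im = z.re * z.im := by
    have := congrArg im hB
    simp only [sq, mul_im, add_im, im_ofNat] at this
    linarith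
  have hzq : z.re ≤ 0 → z.re ^ 2 + z.im ^ 2 ≤ 4 := fun h => by
    have := hz h
    nlinarith [Complex.sq_norm z, normSq_apply z, norm_nonneg z]
  have key := two_add_mul_add_mul_nonneg hBre hre him hzq
  rw [← pow_le_pow_iff_left₀ (norm_nonneg _) (norm_nonneg _) two_ne_zero, Complex.sq_norm,
    Complex.sq_norm, normSq_apply, normSq_apply]
  simp only [sub_re, sub_im, add_re, add_im, re_ofNat, im_ofNat]
  nlinarith [key]

theorem Complex.mul_norm_add_inv_sq_sub_two_mul_re (x : ℂ) (hx : x ≠ 0) :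
    (‖x‖ ^ 2 + (‖x‖ ^ 2)⁻¹) * ‖x + x⁻¹‖ ^ 2 - 2 * ((x + x⁻¹) ^ 2).re =
      (‖x‖ ^ 2 + (‖x‖ ^ 2)⁻¹) ^ 2 - 4 := by
  have hn : normSq x ≠ 0 := normSq_eq_zero.not.2 hx
  have hnx : normSq x = x.re ^ 2 + x.im ^ 2 := by rw [normSq_apply]; ring
  rw [Complex.sq_norm, Complex.sq_norm, normSq_apply (x + x⁻¹), pow_two (x + x⁻¹), mul_re]
  simp only [add_re, add_im, inv_re, inv_im]
  field_simp
  rw [hnx]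
  ring

theorem Complex.norm_add_inv_sq_le_two {x : ℂ} (hx : x ≠ 0)
    (hm : (‖x‖ ^ 2 + (‖x‖ ^ 2)⁻¹) ^ 2 ≤ 2 * (‖x‖ ^ 2 + (‖x‖ ^ 2)⁻¹) + 4)
    (hre : ((x + x⁻¹) ^ 2).re ≤ 0) : ‖(x + x⁻¹) ^ 2‖ ≤ 2 := by
  have hid := mul_norm_add_inv_sq_sub_two_mul_re x hx
  have hm0 : 0 < ‖x‖ ^ 2 + (‖x‖ ^ 2)⁻¹ := by positivity
  rw [norm_pow]
  nlinarith

theorem Complex.norm_div_le_one_of_sq_eq {w B : ℂ} (hB : B ^ 2 = 4 + w ^ 4) (hBre : 0 ≤ B.re)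
    (hw : (w ^ 2).re ≤ 0 → ‖w ^ 2‖ ≤ 2) : ‖(-(2 + w ^ 2) + B) / (2 * w)‖ ≤ 1 := by
  have hle : ‖B - (2 + w ^ 2)‖ ≤ ‖B + (2 + w ^ 2)‖ :=
    norm_sub_le_norm_add_of_sq_eq (by rw [hB]; ring) hBre hw
  have hprod : ‖B - (2 + w ^ 2)‖ * ‖B + (2 + w ^ 2)‖ = (2 * ‖w‖) ^ 2 := by
    rw [← norm_mul, show (B - (2 + w ^ 2)) * (B + (2 + w ^ 2)) = -(2 * w) ^ 2 by
      linear_combination hB]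
    simp [mul_pow]
  have hsq : ‖B - (2 + w ^ 2)‖ ^ 2 ≤ (2 * ‖w‖) ^ 2 := by
    rw [sq, ← hprod]; exact mul_le_mul_of_nonneg_left hle (norm_nonneg _)
  rw [norm_div, norm_mul, Complex.norm_two, neg_add_eq_sub]
  refine div_le_one_of_le₀ ?_ (by positivity)
  exact (pow_le_pow_iff_left₀ (norm_nonneg _) (by positivity) two_ne_zero).1 hsq

theorem stmt_13_general (a : ℝ)
    (ha1 : Real.sqrt ((1 + Real.sqrt 5 - Real.sqrt (2 * Real.sqrt 5 + 2)) / 2) ≤ a)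
    (ha2 : a ≤ Real.sqrt ((1 + Real.sqrt 5 + Real.sqrt (2 * Real.sqrt 5 + 2)) / 2))
    (x₁ : ℂ) (hx₁ : ‖x₁‖ = a) :
    ‖(-(2 + (x₁ + x₁⁻¹) ^ 2) +
      (4 + (x₁ + x₁⁻¹) ^ 4) ^ ((1 : ℂ) / 2)) / (2 * (x₁ + x₁⁻¹))‖ ≤ 1 := by
  have ha0 : 0 < a :=
    (Real.sqrt_pos.2 (by linarith [sqrt_two_mul_sqrt_five_add_two_lt])).trans_le ha1
  have hx : x₁ ≠ 0 := norm_pos_iff.1 (hx₁ ▸ ha0)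
  have hn := sq_add_one_le_one_add_sqrt_five_mul
    ((Real.sqrt_le_left ha0.le).1 ha1) ((Real.le_sqrt' ha0).1 ha2)
  refine norm_div_le_one_of_sq_eq ?_ ?_ (norm_add_inv_sq_le_two hx ?_)
  · rw [one_div]
    exact cpow_ofNat_inv_pow _ 2
  · rw [one_div, cpow_inv_two_re]
    exact Real.sqrt_nonneg _
  · rw [hx₁]
    exact add_inv_sq_le_of_sq_add_one_le (by positivity) hn

/-- For `a` in the stated range, `|x₁| = a` and `x₁² ≠ −1`, setting `w = x₁ + x₁⁻¹`,
the root `y₁₊ = (−(2 + w²) + (4 + w⁴)^{1/2})/(2w)` (principal branch of the square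
root) satisfies `|y₁₊| ≤ 1`. -/
theorem stmt_13 (a : ℝ)
    (ha1 : Real.sqrt ((1 + Real.sqrt 5 - Real.sqrt (2 * Real.sqrt 5 + 2)) / 2) ≤ a)
    (ha2 : a ≤ Real.sqrt ((1 + Real.sqrt 5 + Real.sqrt (2 * Real.sqrt 5 + 2)) / 2))
    (x₁ : ℂ) (hx₁ : ‖x₁‖ = a) (hx₁' : x₁ ^ 2 ≠ -1) :
    ‖(-(2 + (x₁ + x₁⁻¹) ^ 2) +
      (4 + (x₁ + x₁⁻¹) ^ 4) ^ ((1 : ℂ) / 2)) / (2 * (x₁ + x₁⁻¹))‖ ≤ 1 :=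
  stmt_13_general a ha1 ha2 x₁ hx₁
end

section
/- Let a be real with |a − a⁻¹| < 1. Define g : [0, 2π] → ℂ by g(θ) = a·e^{iθ}·(−1 − (a·e^{iθ} + 1 − a⁻¹·e^{−iθ})^{1/2}), where z^{1/2} denotes the principal square root. Then g never vanishes, and (1/(2π)) · ∫₀^{2π} Im(g′(θ)/g(θ)) dθ = 1; that is, the total variation of arg Y₋ along the circle |X| = a is 2π, where Y₋(X) = X·(−1 − (X + 1 − X⁻¹)^{1/2}). -/
/-!
Write `X = a e^{iθ}` and `s(θ) = (X + 1 - X⁻¹)^{1/2}`, so that `g = -X · (1 + s)`.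
The radicand has real part `1 + (a - a⁻¹) cos θ > 0`, hence `Re s > 0` and `1 + s` stays in the
right half-plane. There `arg (1 + s)` is a smooth primitive of `Im ((1 + s)' / (1 + s))`, and it
returns to its initial value after one turn, so the winding of `g` is exactly that of `e^{iθ}`.
-/

open Complex
open scoped Real

theorem Complex.re_cpow_ofReal_pos {z : ℂ} (hz : 0 < z.re) {t : ℝ} (ht : |t| ≤ 1) :
    0 < (z ^ (t : ℂ)).re := by
  have hz0 : z ≠ 0 := fun h => by simp [h] at hz
  rw [cpow_def_of_ne_zero hz0, exp_re]
  have him : (log z * t).im = t * z.arg := by simp [mul_im, log_im, mul_comm]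
  have harg := abs_arg_lt_pi_div_two_iff.2 (Or.inl hz)
  have hbound : |t * z.arg| < π / 2 := by
    rw [abs_mul]
    calc |t| * |z.arg| ≤ 1 * |z.arg| := by gcongr
      _ < π / 2 := by rwa [one_mul]
  have := Real.cos_pos_of_mem_Ioo (abs_lt.1 hbound)
  rw [him]
  positivity

theorem ContDiff.cpow_const_of_mem_slitPlane {n : WithTop ℕ∞} {f : ℝ → ℂ} (hf : ContDiff ℝ n f)
    (hslit : ∀ x, f x ∈ slitPlane) (c : ℂ) : ContDiff ℝ n fun x => f x ^ c := by
  refine contDiff_iff_contDiffAt.2 fun x => ?_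
  have hpow : ContDiffAt ℂ n (fun z : ℂ => z ^ c) (f x) :=
    (analyticAt_id.cpow analyticAt_const (hslit x)).contDiffAt
  exact (hpow.restrict_scalars ℝ).comp x hf.contDiffAt

theorem ContDiff.continuous_logDeriv {𝕜 𝕜' : Type*} [NontriviallyNormedField 𝕜]
    [NontriviallyNormedField 𝕜'] [NormedAlgebra 𝕜 𝕜'] {f : 𝕜 → 𝕜'} (hf : ContDiff 𝕜 1 f)
    (h0 : ∀ x, f x ≠ 0) : Continuous (logDeriv f) :=
  (hf.continuous_deriv le_rfl).div hf.continuous h0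

theorem integral_im_logDeriv_eq_arg_sub {f : ℝ → ℂ} (hf : ContDiff ℝ 1 f)
    (hslit : ∀ x, f x ∈ slitPlane) (a b : ℝ) :
    ∫ x in a..b, (logDeriv f x).im = arg (f b) - arg (f a) := by
  have hderiv (x : ℝ) : HasDerivAt (fun x => arg (f x)) (logDeriv f x).im x := by
    have hlog := ((hf.differentiable one_ne_zero x).hasDerivAt).clog_real (hslit x)
    simpa [Function.comp_def, log_im, logDeriv_apply] using
      imCLM.hasFDerivAt.comp_hasDerivAt x hlog
  refine intervalIntegral.integral_eq_sub_of_hasDerivAt (fun x _ => hderiv x) ?_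
  exact (continuous_im.comp (hf.continuous_logDeriv fun x => slitPlane_ne_zero (hslit x))
    ).intervalIntegrable _ _

theorem logDeriv_exp_mul_I (θ : ℝ) : logDeriv (fun θ : ℝ => exp (θ * I)) θ = I := by
  have h := ((hasDerivAt_id (θ : ℂ)).mul_const I).cexp.comp_ofReal
  simp only [id, one_mul] at h
  rw [logDeriv_apply, h.deriv, mul_div_cancel_left₀ _ (exp_ne_zero _)]

theorem integral_im_logDeriv_const_mul_exp_mul_I_mul {c : ℂ} (hc : c ≠ 0) {f : ℝ → ℂ}
    (hf : ContDiff ℝ 1 f) (hslit : ∀ x, f x ∈ slitPlane) (a b : ℝ) :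
    ∫ θ in a..b, (logDeriv (fun θ : ℝ => c * exp (θ * I) * f θ) θ).im
      = b - a + (arg (f b) - arg (f a)) := by
  have hf0 (θ : ℝ) : f θ ≠ 0 := slitPlane_ne_zero (hslit θ)
  have hlog (θ : ℝ) :
      logDeriv (fun θ : ℝ => c * exp (θ * I) * f θ) θ = I + logDeriv f θ := by
    rw [logDeriv_mul (f := fun θ : ℝ => c * exp (θ * I)) θ (mul_ne_zero hc (exp_ne_zero _))
      (hf0 θ) (by fun_prop) (hf.differentiable one_ne_zero θ), logDeriv_const_mul θ _ hc,
      logDeriv_exp_mul_I]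
  have hint : IntervalIntegrable (fun θ => (logDeriv f θ).im) MeasureTheory.volume a b :=
    (continuous_im.comp (hf.continuous_logDeriv hf0)).intervalIntegrable _ _
  simp only [hlog, add_im, I_im]
  rw [intervalIntegral.integral_add intervalIntegrable_const hint,
    integral_im_logDeriv_eq_arg_sub hf hslit, intervalIntegral.integral_const, smul_eq_mul, mul_one]

/-- `X + 1 - X⁻¹` at `X = a e^{iθ}`. -/
noncomputable def circleRadicand (a θ : ℝ) : ℂ :=
  (a : ℂ) * exp (θ * I) + 1 - (a : ℂ)⁻¹ * exp (-θ * I)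

theorem circleRadicand_re (a θ : ℝ) :
    (circleRadicand a θ).re = 1 + (a - a⁻¹) * Real.cos θ := by
  simp only [circleRadicand, neg_mul, sub_re, add_re, mul_re, ofReal_re, exp_re, I_re, mul_zero,
    ofReal_im, I_im, mul_one, sub_self, Real.exp_zero, mul_im, add_zero, one_mul, exp_im, zero_mul,
    sub_zero, one_re, inv_re, normSq_ofReal, div_self_mul_self', neg_re, neg_zero, neg_im,
    Real.cos_neg, inv_im, zero_div, Real.sin_neg, mul_neg]
  ring

theorem circleRadicand_re_pos {a : ℝ} (hta : |a - a⁻¹| < 1) (θ : ℝ) :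
    0 < (circleRadicand a θ).re := by
  have hcos : |(a - a⁻¹) * Real.cos θ| < 1 := by
    rw [abs_mul]
    calc |a - a⁻¹| * |Real.cos θ| ≤ |a - a⁻¹| * 1 := by gcongr; exact Real.abs_cos_le_one θ
      _ < 1 := by rwa [mul_one]
  rw [circleRadicand_re]
  linarith [neg_abs_le ((a - a⁻¹) * Real.cos θ)]

theorem circleRadicand_periodic (a : ℝ) : Function.Periodic (circleRadicand a) (2 * π) := by
  intro θ
  have h := exp_mul_I_periodic.sub_eq (-θ : ℂ)
  simp only [circleRadicand, ofReal_add, ofReal_mul, ofReal_ofNat, neg_add, ← sub_eq_add_neg, h,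
    exp_mul_I_periodic (θ : ℂ)]

theorem contDiff_circleRadicand (a : ℝ) {n : WithTop ℕ∞} : ContDiff ℝ n (circleRadicand a) := by
  have : ContDiff ℝ n fun θ : ℝ => (θ : ℂ) := ofRealCLM.contDiff
  unfold circleRadicand
  fun_prop

theorem one_add_circleRadicand_cpow_mem_slitPlane {a : ℝ} (hta : |a - a⁻¹| < 1) (θ : ℝ) :
    1 + circleRadicand a θ ^ ((1 : ℂ) / 2) ∈ slitPlane := by
  have h := re_cpow_ofReal_pos (circleRadicand_re_pos hta θ) (t := 1 / 2)
    (by norm_num [abs_of_pos])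
  push_cast at h
  exact mem_slitPlane_iff.2 (Or.inl (by simpa using add_pos one_pos h))

theorem contDiff_one_add_circleRadicand_cpow {a : ℝ} (hta : |a - a⁻¹| < 1) :
    ContDiff ℝ 1 fun θ => 1 + circleRadicand a θ ^ ((1 : ℂ) / 2) :=
  contDiff_const.add ((contDiff_circleRadicand a).cpow_const_of_mem_slitPlane
    (fun θ => mem_slitPlane_iff.2 (Or.inl (circleRadicand_re_pos hta θ))) _)

/-- For real `a > 0` with `|a − a⁻¹| < 1`, the function
`g(θ) = a·e^{iθ}·(−1 − (a·e^{iθ} + 1 − a⁻¹·e^{−iθ})^{1/2})` (principal square root),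
i.e. `Y₋` evaluated along the circle `|X| = a`, never vanishes, and the total variation
of `arg Y₋` along the circle is `2π`: `(1/(2π))·∫₀^{2π} Im(g′(θ)/g(θ)) dθ = 1`. -/
theorem stmt_18 (a : ℝ) (ha : 0 < a) (hta : |a - a⁻¹| < 1)
    (g : ℝ → ℂ)
    (hg : g = fun θ : ℝ => (a : ℂ) * Complex.exp (θ * Complex.I) *
      (-1 - ((a : ℂ) * Complex.exp (θ * Complex.I) + 1 -
        (a : ℂ)⁻¹ * Complex.exp (-θ * Complex.I)) ^ ((1 : ℂ) / 2))) :
    (∀ θ : ℝ, g θ ≠ 0) ∧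
    (1 / (2 * Real.pi)) * ∫ θ in (0:ℝ)..(2 * Real.pi), (deriv g θ / g θ).im = 1 := by
  have hc : -(a : ℂ) ≠ 0 := neg_ne_zero.2 (ofReal_ne_zero.2 ha.ne')
  have hg_eq : g = fun θ : ℝ =>
      -(a : ℂ) * exp (θ * I) * (1 + circleRadicand a θ ^ ((1 : ℂ) / 2)) := by
    rw [hg]
    funext θ
    simp only [circleRadicand]
    ring
  have hslit := one_add_circleRadicand_cpow_mem_slitPlane hta
  refine ⟨fun θ => hg_eq ▸
    mul_ne_zero (mul_ne_zero hc (exp_ne_zero _)) (slitPlane_ne_zero (hslit θ)), ?_⟩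
  simp only [← logDeriv_apply]
  rw [hg_eq, integral_im_logDeriv_const_mul_exp_mul_I_mul hc
    (contDiff_one_add_circleRadicand_cpow hta) hslit, (circleRadicand_periodic a).eq]
  field_simp
  ring
end
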